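/- For every n ≥ 5 there exists a triangle-free, non-bipartite simple graph on n vertices with exactly ⌊(n−1)²/4⌋ + 1 edges. -/

import Mathlib

/-!
Subdivide one edge `xy` of the complete bipartite graph `K_{a,b}` with `a + b = n - 1` as equal
as possible, i.e. delete `xy` and join a new vertex `z` to `x` and `y`. This adds one edge to the
`a * b = ⌊(n - 1)² / 4⌋` edges of `K_{a,b}`. A triangle through `z` would need the deleted edge
`xy`, and every other triangle would already lie in the bipartite graph `K_{a,b}`. For `x' ≠ x`
and `y' ≠ y` on the respective sides, `z x y' x' y z` is a closed walk of length five, so the graph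
is not bipartite.
-/

lemma Nat.div_two_mul_sub_div_two (m : ℕ) : m / 2 * (m - m / 2) = m ^ 2 / 4 := by
  obtain ⟨k, rfl | rfl⟩ := Nat.even_or_odd' m
  · rw [show (2 * k) ^ 2 = 4 * (k * k) by ring, show 2 * k / 2 = k by omega,
      show 2 * k - k = k by omega]
    omega
  · rw [show (2 * k + 1) ^ 2 = 4 * (k * (k + 1)) + 1 by ring, show (2 * k + 1) / 2 = k by omega,
      show 2 * k + 1 - k = k + 1 by omega]
    omega

namespace SimpleGraph

lemma ncard_edgeSet_map {V W : Type*} (f : V ↪ W) (G : SimpleGraph V) :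
    (G.map f).edgeSet.ncard = G.edgeSet.ncard := by
  rw [edgeSet_map, Set.ncard_image_of_injective _ f.sym2Map.injective]

lemma ncard_edgeSet_completeBipartiteGraph (W₁ W₂ : Type*) [Finite W₁] [Finite W₂] :
    (completeBipartiteGraph W₁ W₂).edgeSet.ncard = Nat.card W₁ * Nat.card W₂ := by
  rw [edgeSet_completeBipartiteGraph, Set.ncard_range_of_injective, Nat.card_prod]
  grind [Function.Injective]

section SubdivideEdge

variable {V : Type*} (H : SimpleGraph V) (x y : V)

/-- The new vertex of the subdivided edge `xy` is `none`. -/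
def subdivideEdge : SimpleGraph (Option V) :=
  (H.map Function.Embedding.some).deleteEdges {s(some x, some y)} ⊔
    fromEdgeSet {s(none, some x), s(none, some y)}

variable {H x y}

@[simp]
lemma subdivideEdge_adj_some_some {u v : V} :
    (H.subdivideEdge x y).Adj (some u) (some v) ↔ H.Adj u v ∧ s(u, v) ≠ s(x, y) := by
  simp only [subdivideEdge, sup_adj, deleteEdges_adj, map_adj, fromEdgeSet_adj]
  simp

@[simp]
lemma subdivideEdge_adj_none_some {v : V} :
    (H.subdivideEdge x y).Adj none (some v) ↔ v = x ∨ v = y := by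
  simp only [subdivideEdge, sup_adj, deleteEdges_adj, map_adj, fromEdgeSet_adj]
  simp

@[simp]
lemma subdivideEdge_adj_some_none {v : V} :
    (H.subdivideEdge x y).Adj (some v) none ↔ v = x ∨ v = y := by
  rw [adj_comm, subdivideEdge_adj_none_some]

lemma subdivideEdge_not_adj_of_adj_none {u v : V} (hu : (H.subdivideEdge x y).Adj none (some u))
    (hv : (H.subdivideEdge x y).Adj none (some v)) :
    ¬(H.subdivideEdge x y).Adj (some u) (some v) := by
  simp only [subdivideEdge_adj_none_some] at hu hv
  rcases hu with rfl | rfl <;> rcases hv with rfl | rfl <;> simp [Sym2.eq_swap]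

lemma CliqueFree.subdivideEdge (hH : H.CliqueFree 3) : (H.subdivideEdge x y).CliqueFree 3 := by
  classical
  rintro t ht
  rw [is3Clique_iff] at ht
  obtain ⟨u, v, w, huv, huw, hvw, -⟩ := ht
  cases u <;> cases v <;> cases w
  case some.some.some a b c =>
    simp only [subdivideEdge_adj_some_some] at huv huw hvw
    exact hH {a, b, c} (is3Clique_triple_iff.2 ⟨huv.1, huw.1, hvw.1⟩)
  all_goals first
    | exact huv.ne rfl | exact huw.ne rfl | exact hvw.ne rfl
    | exact subdivideEdge_not_adj_of_adj_none huv huw hvw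
    | exact subdivideEdge_not_adj_of_adj_none huv.symm hvw huw
    | exact subdivideEdge_not_adj_of_adj_none huw.symm hvw.symm huv

lemma ncard_edgeSet_subdivideEdge [Finite V] (hxy : H.Adj x y) :
    (H.subdivideEdge x y).edgeSet.ncard = H.edgeSet.ncard + 1 := by
  have hdisj : Disjoint (Function.Embedding.some.sym2Map '' H.edgeSet \ {s(some x, some y)})
      ({s(none, some x), s(none, some y)} \ Sym2.diagSet) := by
    rw [Set.disjoint_left]
    rintro _ ⟨⟨e, -, rfl⟩, -⟩ ⟨he, -⟩
    induction e using Sym2.ind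
    simp at he
  have hmem : s(some x, some y) ∈ Function.Embedding.some.sym2Map '' H.edgeSet :=
    ⟨s(x, y), hxy, rfl⟩
  have hpair : ({s(none, some x), s(none, some y)} \ Sym2.diagSet : Set (Sym2 (Option V))).ncard
      = 2 := by
    rw [sdiff_eq_left.2 (by simp [Set.disjoint_left]), Set.ncard_pair (by simpa using hxy.ne)]
  rw [subdivideEdge, edgeSet_sup, edgeSet_deleteEdges, edgeSet_fromEdgeSet, edgeSet_map,
    Set.ncard_union_eq hdisj, hpair,
    ← Set.ncard_image_of_injective H.edgeSet Function.Embedding.some.sym2Map.injective,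
    ← Set.ncard_sdiff_singleton_add_one hmem]

lemma not_colorable_two_subdivideEdge {x' y' : V} (hxy' : H.Adj x y') (hy'x' : H.Adj y' x')
    (hx'y : H.Adj x' y) (hx' : x' ≠ x) (hy' : y' ≠ y) :
    ¬(H.subdivideEdge x y).Colorable 2 := by
  intro hc
  have h₁ : (H.subdivideEdge x y).Adj none (some x) := by simp
  have h₂ : (H.subdivideEdge x y).Adj (some x) (some y') := by simp [hxy', hy', hxy'.ne.symm]
  have h₃ : (H.subdivideEdge x y).Adj (some y') (some x') := by simp [hy'x', hy', hxy'.ne.symm]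
  have h₄ : (H.subdivideEdge x y).Adj (some x') (some y) := by simp [hx'y, hx', hx'y.ne]
  have h₅ : (H.subdivideEdge x y).Adj (some y) none := by simp
  have := two_colorable_iff_forall_loop_even.1 hc none
    (.cons h₁ <| .cons h₂ <| .cons h₃ <| .cons h₄ <| .cons h₅ .nil)
  exact (by decide : ¬Even 5) this

end SubdivideEdge

end SimpleGraph

theorem stmt_12 (n : ℕ) (hn : 5 ≤ n) :
    ∃ G : SimpleGraph (Fin n), G.CliqueFree 3 ∧ ¬ G.Colorable 2 ∧
      G.edgeSet.ncard = (n - 1) ^ 2 / 4 + 1 := by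
  set a := (n - 1) / 2
  set b := n - 1 - a
  have ha : 2 ≤ a := by omega
  have hb : 2 ≤ b := by omega
  let K := completeBipartiteGraph (Fin a) (Fin b)
  let G := K.subdivideEdge (.inl ⟨0, by omega⟩) (.inr ⟨0, by omega⟩)
  let e : Option (Fin a ⊕ Fin b) ≃ Fin n := Fintype.equivFinOfCardEq (by simp; omega)
  have hK : K.CliqueFree 3 :=
    (SimpleGraph.CompleteBipartiteGraph.bicoloring _ _).colorable.cliqueFree (by simp)
  have hG : ¬G.Colorable 2 :=
    SimpleGraph.not_colorable_two_subdivideEdge (x' := .inl ⟨1, by omega⟩)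
      (y' := .inr ⟨1, by omega⟩) (by simp [K]) (by simp [K]) (by simp [K]) (by simp) (by simp)
  refine ⟨G.map e.toEmbedding, SimpleGraph.cliqueFree_map_iff.2 hK.subdivideEdge,
    fun h ↦ hG (h.of_hom (SimpleGraph.Iso.map e G).toHom), ?_⟩
  rw [SimpleGraph.ncard_edgeSet_map, SimpleGraph.ncard_edgeSet_subdivideEdge (by simp [K]),
    SimpleGraph.ncard_edgeSet_completeBipartiteGraph, Nat.card_fin, Nat.card_fin,
    Nat.div_two_mul_sub_div_two]
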